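/- For fixed ε > 0 and threshold width, the power function β(w) = Φ̄(z_{αw/m} − ε) is strictly increasing and concave in w on (0, m/α) whenever z_{αw/m} > ε. Specifically, β'(w) = (α/m)·exp(ε·z_{αw/m} − ε²/2) > 0, and β''(w) < 0 when z_{αw/m} > ε. -/

import Mathlib

open MeasureTheory ProbabilityTheory Set

/-- The standard normal CDF. -/
noncomputable def Phi (x : ℝ) : ℝ := ((gaussianReal 0 1) (Set.Iic x)).toReal

/-!
Since `Φ̄ (z w) = (α/m) w`, `z` is `Φ̄⁻¹` composed with an affine map, and the inverse function
theorem gives `z' = -(α/m) / φ(z)`. The chain rule together with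
`φ(z - ε) = φ(z) exp(εz - ε²/2)` turns this into `β' = (α/m) exp(εz - ε²/2) > 0`, and
differentiating once more gives `β'' = -ε (α/m)² exp(εz - ε²/2) / φ(z) < 0`.
-/

open Filter Topology

local notation "φ" => gaussianPDFReal 0 1

theorem HasStrictDerivAt.hasDerivAt_of_comp_eventuallyEq {𝕜 : Type*} [NontriviallyNormedField 𝕜]
    [CompleteSpace 𝕜] {f g a : 𝕜 → 𝕜} {f' a' x : 𝕜} (hf : HasStrictDerivAt f f' (g x))
    (hf' : f' ≠ 0) (hinj : Function.Injective f) (ha : HasDerivAt a a' x)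
    (hfg : ∀ᶠ y in 𝓝 x, f (g y) = a y) : HasDerivAt g (f'⁻¹ * a') x := by
  -- `g` agrees near `x` with the local inverse of `f` after `a`, by injectivity of `f`;
  -- this replaces any continuity assumption on `g`.
  set h := hf.localInverse f f' (g x) hf'
  have hx : f (g x) = a x := hfg.self_of_nhds
  have hh : HasDerivAt h f'⁻¹ (a x) := hx ▸ (hf.to_localInverse hf').hasDerivAt
  have ha_tendsto : Tendsto a (𝓝 x) (𝓝 (f (g x))) := hx ▸ ha.continuousAt.tendsto
  have hright : ∀ᶠ y in 𝓝 x, f (h (a y)) = a y :=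
    ha_tendsto.eventually (hf.eventually_right_inverse hf')
  have hg : g =ᶠ[𝓝 x] h ∘ a := by
    filter_upwards [hfg, hright] with y hfgy hright_y
    exact hinj (hfgy.trans hright_y.symm)
  exact (hh.comp x ha).congr_of_eventuallyEq hg

lemma Phi_eq_integral (x : ℝ) : Phi x = ∫ t in Iic x, φ t := by
  rw [Phi, gaussianReal_apply_eq_integral 0 one_ne_zero (Iic x), ENNReal.toReal_ofReal]
  exact setIntegral_nonneg measurableSet_Iic fun t _ => gaussianPDFReal_nonneg 0 1 t

lemma hasStrictDerivAt_Phi (x : ℝ) : HasStrictDerivAt Phi (φ x) x := by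
  have hint := integrable_gaussianPDFReal 0 1
  have hPhi : Phi = fun y => (∫ t in Iic (0 : ℝ), φ t) + ∫ t in (0 : ℝ)..y, φ t := by
    funext y
    rw [Phi_eq_integral, ← intervalIntegral.integral_Iic_sub_Iic hint.integrableOn
      hint.integrableOn, add_sub_cancel]
  have hcont : Continuous φ := by rw [gaussianPDFReal_def]; fun_prop
  rw [hPhi]
  exact (hcont.integral_hasStrictDerivAt 0 x).const_add _

lemma strictMono_Phi : StrictMono Phi :=
  strictMono_of_hasDerivAt_pos (fun x => (hasStrictDerivAt_Phi x).hasDerivAt)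
    fun x => gaussianPDFReal_pos 0 1 x one_ne_zero

lemma gaussianPDFReal_sub_eq_mul_exp (z ε : ℝ) :
    φ (z - ε) = φ z * Real.exp (ε * z - ε ^ 2 / 2) := by
  simp only [gaussianPDFReal, NNReal.coe_one, mul_assoc, ← Real.exp_add]
  congr 3
  ring

section QuantileOfAffine

variable {z : ℝ → ℝ} {c w : ℝ}

lemma hasDerivAt_of_one_sub_Phi_comp_eq (hz : ∀ᶠ y in 𝓝 w, 1 - Phi (z y) = c * y) :
    HasDerivAt z (-c / φ (z w)) w := by
  have hPhi : ∀ᶠ y in 𝓝 w, Phi (z y) = 1 - c * y := hz.mono fun y hy => by linarith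
  have haff : HasDerivAt (fun y => 1 - c * y) (-c) w := by
    simpa using ((hasDerivAt_id w).const_mul c).const_sub 1
  rw [div_eq_inv_mul]
  exact (hasStrictDerivAt_Phi (z w)).hasDerivAt_of_comp_eventuallyEq
    (gaussianPDFReal_pos 0 1 _ one_ne_zero).ne' strictMono_Phi.injective haff hPhi

variable (ε : ℝ)

lemma hasDerivAt_one_sub_Phi_comp_sub (hz : ∀ᶠ y in 𝓝 w, 1 - Phi (z y) = c * y) :
    HasDerivAt (fun y => 1 - Phi (z y - ε)) (c * Real.exp (ε * z w - ε ^ 2 / 2)) w := by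
  have hφ : φ (z w) ≠ 0 := (gaussianPDFReal_pos 0 1 _ one_ne_zero).ne'
  refine (((hasStrictDerivAt_Phi _).hasDerivAt.comp w
    ((hasDerivAt_of_one_sub_Phi_comp_eq hz).sub_const ε)).const_sub 1).congr_deriv ?_
  rw [gaussianPDFReal_sub_eq_mul_exp]
  field_simp

lemma hasDerivAt_deriv_one_sub_Phi_comp_sub (hz : ∀ᶠ y in 𝓝 w, 1 - Phi (z y) = c * y) :
    HasDerivAt (deriv fun y => 1 - Phi (z y - ε))
      (-(ε * c ^ 2 * Real.exp (ε * z w - ε ^ 2 / 2) / φ (z w))) w := by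
  have hderiv : (deriv fun y => 1 - Phi (z y - ε)) =ᶠ[𝓝 w]
      fun y => c * Real.exp (ε * z y - ε ^ 2 / 2) :=
    hz.eventually_nhds.mono fun y hy => (hasDerivAt_one_sub_Phi_comp_sub ε hy).deriv
  have hexp := ((((hasDerivAt_of_one_sub_Phi_comp_eq hz).const_mul ε).sub_const
    (ε ^ 2 / 2)).exp).const_mul c
  refine (hexp.congr_of_eventuallyEq hderiv).congr_deriv ?_
  ring

end QuantileOfAffine

theorem power_increasing_concave_general
    (ε : ℝ) (hε : 0 < ε) (α : ℝ)
    (m : ℕ)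
    (zfun : ℝ → ℝ)
    (hz : ∀ w ∈ Ioo (0 : ℝ) (m / α), 1 - Phi (zfun w) = α * w / m)
    (β : ℝ → ℝ) (hβ : ∀ w, β w = 1 - Phi (zfun w - ε)) :
    StrictMonoOn β (Ioo (0 : ℝ) (m / α)) ∧
    (∀ w ∈ Ioo (0 : ℝ) (m / α),
      HasDerivAt β ((α / m) * Real.exp (ε * zfun w - ε ^ 2 / 2)) w ∧
      0 < (α / m) * Real.exp (ε * zfun w - ε ^ 2 / 2)) ∧
    (∀ w ∈ Ioo (0 : ℝ) (m / α), ε < zfun w → deriv (deriv β) w < 0) := by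
  obtain rfl : β = fun w => 1 - Phi (zfun w - ε) := funext hβ
  have hzU : ∀ w ∈ Ioo (0 : ℝ) (m / α), ∀ᶠ y in 𝓝 w, 1 - Phi (zfun y) = α / m * y :=
    fun w hw => eventually_of_mem (isOpen_Ioo.mem_nhds hw) fun y hy => (hz y hy).trans (by ring)
  have hc : ∀ w ∈ Ioo (0 : ℝ) (m / α), 0 < α / m := fun w hw => by
    simpa only [inv_div] using inv_pos.2 (hw.1.trans hw.2)
  have hderiv := fun w hw => hasDerivAt_one_sub_Phi_comp_sub ε (hzU w hw)
  have hpos : ∀ w ∈ Ioo (0 : ℝ) (m / α), 0 < α / m * Real.exp (ε * zfun w - ε ^ 2 / 2) :=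
    fun w hw => mul_pos (hc w hw) (Real.exp_pos _)
  refine ⟨?_, fun w hw => ⟨hderiv w hw, hpos w hw⟩, fun w hw _ => ?_⟩
  · refine strictMonoOn_of_deriv_pos (convex_Ioo _ _)
      (fun w hw => (hderiv w hw).continuousAt.continuousWithinAt) fun w hw => ?_
    rw [interior_Ioo] at hw
    exact (hderiv w hw).deriv ▸ hpos w hw
  · rw [(hasDerivAt_deriv_one_sub_Phi_comp_sub ε (hzU w hw)).deriv, neg_lt_zero]
    have := hc w hw
    have := gaussianPDFReal_pos 0 1 (zfun w) one_ne_zero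
    positivity

/-- The power `β(w) = Φ̄(z_{αw/m} − ε)` is strictly increasing on `(0, m/α)` with
derivative `β'(w) = (α/m) exp(ε z_{αw/m} − ε²/2) > 0`, and `β''(w) < 0` whenever
`z_{αw/m} > ε`. -/
theorem power_increasing_concave
    (ε : ℝ) (hε : 0 < ε) (α : ℝ) (hα : α ∈ Set.Ioo (0 : ℝ) 1)
    (m : ℕ) (hm : 1 ≤ m)
    (zfun : ℝ → ℝ)
    (hz : ∀ w ∈ Ioo (0 : ℝ) (m / α), 1 - Phi (zfun w) = α * w / m)
    (β : ℝ → ℝ) (hβ : ∀ w, β w = 1 - Phi (zfun w - ε)) :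
    StrictMonoOn β (Ioo (0 : ℝ) (m / α)) ∧
    (∀ w ∈ Ioo (0 : ℝ) (m / α),
      HasDerivAt β ((α / m) * Real.exp (ε * zfun w - ε ^ 2 / 2)) w ∧
      0 < (α / m) * Real.exp (ε * zfun w - ε ^ 2 / 2)) ∧
    (∀ w ∈ Ioo (0 : ℝ) (m / α), ε < zfun w → deriv (deriv β) w < 0) :=
  power_increasing_concave_general ε hε α m zfun hz β hβ
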